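/- arXiv:2105.05237 — 8 statements merged into one kernel-verified Lean document; each statement's English description precedes it below -/
import Mathlib

section
/- With λ, c, u > 0, the long-term average freshness of a file in a single-cache system, defined as F = 1 − λ·E[min(X+Y, T_s)] where X ~ Exp(c), Y ~ Exp(u), T_s ~ Exp(λ) are independent, equals (u/(λ+u))·(c/(λ+c)). -/
open MeasureTheory ProbabilityTheory
open Real Set

/-! With `Z = X + Y`, the layer-cake formula and the independence of `Z` and `T` give
`E[min(Z, T)] = ∫₀^∞ P(Z > s) P(T > s) ds = ∫₀^∞ P(Z > s) e^{-λs} ds`, and a second layer-cake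
formula turns the last integral into `E[(1 - e^{-λZ}) / λ]`. Hence the freshness equals the
Laplace transform `E[e^{-λZ}]`, which by independence factors into the Laplace transforms
`c / (c + λ)` and `u / (u + λ)` of the two exponential delays. -/

lemma integral_exp_neg_mul {r : ℝ} (hr : r ≠ 0) (z : ℝ) :
    ∫ t in 0..z, exp (-r * t) = (1 - exp (-r * z)) / r := by
  rw [intervalIntegral.integral_comp_mul_left exp (neg_ne_zero.2 hr), integral_exp, mul_zero,
    exp_zero, smul_eq_mul]
  field_simp
  ring

namespace ProbabilityTheory

lemma expMeasure_eq_withDensity (r : ℝ) :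
    expMeasure r = volume.withDensity (exponentialPDF r) :=
  rfl

lemma measurable_exponentialPDF (r : ℝ) : Measurable (exponentialPDF r) :=
  (measurable_exponentialPDFReal r).ennreal_ofReal

lemma ae_nonneg_expMeasure (r : ℝ) : ∀ᵐ x ∂expMeasure r, 0 ≤ x := by
  simp only [ae_iff, not_le, expMeasure_eq_withDensity]
  exact (withDensity_apply _ measurableSet_Iio).trans (lintegral_exponentialPDF_of_nonpos le_rfl)

lemma expMeasure_Ioi {r s : ℝ} (hr : 0 < r) (hs : 0 ≤ s) :
    expMeasure r (Ioi s) = ENNReal.ofReal (exp (-r * s)) := by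
  have := isProbabilityMeasure_expMeasure hr
  have hexp : exp (-(r * s)) ≤ 1 := exp_le_one_iff.2 (by nlinarith)
  rw [← compl_Iic, prob_compl_eq_one_sub measurableSet_Iic, ← ofReal_cdf, cdf_expMeasure_eq hr,
    if_pos hs, ← ENNReal.ofReal_one, ← ENNReal.ofReal_sub _ (by linarith), neg_mul, sub_sub_cancel]

lemma mgf_expMeasure {r t : ℝ} (hr : 0 < r) (ht : t < r) :
    mgf id (expMeasure r) t = r / (r - t) := by
  have hrt : 0 < r - t := sub_pos.2 ht
  have htilt : ∀ x, exponentialPDF r x * ENNReal.ofReal (exp (t * x))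
      = ENNReal.ofReal (r / (r - t)) * exponentialPDF (r - t) x := by
    intro x
    simp only [exponentialPDF_eq]
    split_ifs
    · rw [← ENNReal.ofReal_mul (by positivity), ← ENNReal.ofReal_mul (by positivity), mul_assoc,
        ← exp_add, ← mul_assoc, div_mul_cancel₀ _ hrt.ne']
      ring_nf
    · simp
  rw [mgf, integral_eq_lintegral_of_nonneg_ae (ae_of_all _ fun x => (exp_pos _).le)
      (by fun_prop), expMeasure_eq_withDensity,
    lintegral_withDensity_eq_lintegral_mul _ (measurable_exponentialPDF r) (by fun_prop)]
  simp only [Pi.mul_apply, id, htilt]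
  rw [lintegral_const_mul _ (measurable_exponentialPDF _), lintegral_exponentialPDF_eq_one hrt,
    mul_one, ENNReal.toReal_ofReal (by positivity)]

variable {Ω : Type*} [MeasurableSpace Ω] {μ : Measure Ω} {r : ℝ} {X Z T : Ω → ℝ}

lemma ae_nonneg_of_map_eq_expMeasure (hX : AEMeasurable X μ) (hlaw : μ.map X = expMeasure r) :
    ∀ᵐ ω ∂μ, 0 ≤ X ω :=
  ae_of_ae_map hX (hlaw ▸ ae_nonneg_expMeasure r)

lemma IndepFun.lintegral_ofReal_min (hind : IndepFun Z T μ) (hZ : AEMeasurable Z μ)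
    (hT : AEMeasurable T μ) (hZ0 : ∀ᵐ ω ∂μ, 0 ≤ Z ω) (hT0 : ∀ᵐ ω ∂μ, 0 ≤ T ω) :
    ∫⁻ ω, ENNReal.ofReal (min (Z ω) (T ω)) ∂μ
      = ∫⁻ s in Ioi 0, μ {ω | s < Z ω} * μ {ω | s < T ω} := by
  have hmin0 : 0 ≤ᵐ[μ] fun ω => min (Z ω) (T ω) := by
    filter_upwards [hZ0, hT0] with ω hZω hTω using le_min hZω hTω
  rw [lintegral_eq_lintegral_meas_lt μ hmin0 (hZ.min hT)]
  refine lintegral_congr fun s => ?_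
  simp only [lt_min_iff, ofPred_and]
  exact hind.measure_inter_preimage_eq_mul _ _ measurableSet_Ioi measurableSet_Ioi

lemma lintegral_ofReal_min_of_map_eq_expMeasure (hr : 0 < r) (hind : IndepFun Z T μ)
    (hZ : AEMeasurable Z μ) (hT : AEMeasurable T μ) (hZ0 : ∀ᵐ ω ∂μ, 0 ≤ Z ω)
    (hlaw : μ.map T = expMeasure r) :
    ∫⁻ ω, ENNReal.ofReal (min (Z ω) (T ω)) ∂μ
      = ∫⁻ ω, ENNReal.ofReal ((1 - exp (-r * Z ω)) / r) ∂μ := by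
  have hsurvival : ∀ s ∈ Ioi (0 : ℝ), μ {ω | s < T ω} = ENNReal.ofReal (exp (-r * s)) := by
    intro s hs
    rw [← expMeasure_Ioi hr (le_of_lt hs), ← hlaw,
      Measure.map_apply_of_aemeasurable hT measurableSet_Ioi]
    rfl
  rw [hind.lintegral_ofReal_min hZ hT hZ0 (ae_nonneg_of_map_eq_expMeasure hT hlaw),
    setLIntegral_congr_fun measurableSet_Ioi fun s hs => by rw [hsurvival s hs],
    ← lintegral_comp_eq_lintegral_meas_lt_mul μ hZ0 hZ
      (fun _ _ => (by fun_prop : Continuous fun t => exp (-r * t)).intervalIntegrable _ _)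
      (ae_of_all _ fun _ => (exp_pos _).le)]
  simp only [integral_exp_neg_mul hr.ne']

theorem one_sub_mul_integral_min_eq_mgf [IsProbabilityMeasure μ] (hr : 0 < r)
    (hind : IndepFun Z T μ) (hZ : AEMeasurable Z μ) (hT : AEMeasurable T μ)
    (hZ0 : ∀ᵐ ω ∂μ, 0 ≤ Z ω) (hlaw : μ.map T = expMeasure r) :
    1 - r * ∫ ω, min (Z ω) (T ω) ∂μ = mgf Z μ (-r) := by
  have hmin0 : 0 ≤ᵐ[μ] fun ω => min (Z ω) (T ω) := by
    filter_upwards [hZ0, ae_nonneg_of_map_eq_expMeasure hT hlaw] with ω hZω hTω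
      using le_min hZω hTω
  have hexp_le_one : ∀ᵐ ω ∂μ, exp (-r * Z ω) ≤ 1 := by
    filter_upwards [hZ0] with ω hZω using exp_le_one_iff.2 (by nlinarith)
  have hint : Integrable (fun ω => exp (-r * Z ω)) μ :=
    (integrable_const 1).mono' (by fun_prop) <| by
      filter_upwards [hexp_le_one] with ω hω using by rwa [norm_of_nonneg (exp_pos _).le]
  have hF0 : 0 ≤ᵐ[μ] fun ω => (1 - exp (-r * Z ω)) / r := by
    filter_upwards [hexp_le_one] with ω hω using div_nonneg (sub_nonneg.2 hω) hr.le
  have hmin : ∫ ω, min (Z ω) (T ω) ∂μ = ∫ ω, (1 - exp (-r * Z ω)) / r ∂μ := by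
    rw [integral_eq_lintegral_of_nonneg_ae hmin0 (hZ.min hT).aestronglyMeasurable,
      integral_eq_lintegral_of_nonneg_ae hF0 (by fun_prop),
      lintegral_ofReal_min_of_map_eq_expMeasure hr hind hZ hT hZ0 hlaw]
  rw [hmin, integral_div, integral_sub (integrable_const 1) hint, integral_const, probReal_univ,
    one_smul, mgf]
  field_simp
  ring

end ProbabilityTheory

theorem single_cache_freshness_general
    {Ω : Type*} [MeasurableSpace Ω] (μ : Measure Ω) [IsProbabilityMeasure μ]
    (lam c u : ℝ) (hlam : 0 < lam) (hc : 0 < c) (hu : 0 < u)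
    (X Y T : Ω → ℝ) (hXm : Measurable X) (hYm : Measurable Y) (hTm : Measurable T)
    (hX : μ.map X = expMeasure c) (hY : μ.map Y = expMeasure u)
    (hT : μ.map T = expMeasure lam)
    (hind : iIndepFun ![X, Y, T] μ) :
    1 - lam * ∫ ω, min (X ω + Y ω) (T ω) ∂μ = (u / (lam + u)) * (c / (lam + c)) := by
  have hXY : IndepFun X Y μ := hind.indepFun (i := 0) (j := 1) (by decide)
  have hXYT : IndepFun (X + Y) T μ :=
    hind.indepFun_add_left (fun i => by fin_cases i <;> assumption) 0 1 2 (by decide) (by decide)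
  have hXY0 : ∀ᵐ ω ∂μ, 0 ≤ X ω + Y ω := by
    filter_upwards [ae_nonneg_of_map_eq_expMeasure hXm.aemeasurable hX,
      ae_nonneg_of_map_eq_expMeasure hYm.aemeasurable hY] with ω hXω hYω using add_nonneg hXω hYω
  calc 1 - lam * ∫ ω, min (X ω + Y ω) (T ω) ∂μ
      = mgf (X + Y) μ (-lam) :=
        one_sub_mul_integral_min_eq_mgf hlam hXYT (hXm.add hYm).aemeasurable hTm.aemeasurable
          hXY0 hT
    _ = mgf id (expMeasure c) (-lam) * mgf id (expMeasure u) (-lam) := by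
        rw [hXY.mgf_add' hXm.aestronglyMeasurable hYm.aestronglyMeasurable,
          ← mgf_id_map hXm.aemeasurable, ← mgf_id_map hYm.aemeasurable, hX, hY]
    _ = (u / (lam + u)) * (c / (lam + c)) := by
        rw [mgf_expMeasure hc (by linarith), mgf_expMeasure hu (by linarith), sub_neg_eq_add,
          sub_neg_eq_add, add_comm c, add_comm u, mul_comm]

/-- Long-term average freshness of a file in a single-cache system:
`F = 1 − λ·E[min(X+Y, T)] = (u/(λ+u))·(c/(λ+c))`. -/
theorem single_cache_freshness
    {Ω : Type*} [MeasurableSpace Ω] (μ : Measure Ω) [IsProbabilityMeasure μ]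
    (lam c u : ℝ) (hlam : 0 < lam) (hc : 0 < c) (hu : 0 < u) (hcu : c ≠ u)
    (X Y T : Ω → ℝ) (hXm : Measurable X) (hYm : Measurable Y) (hTm : Measurable T)
    (hX : μ.map X = expMeasure c) (hY : μ.map Y = expMeasure u)
    (hT : μ.map T = expMeasure lam)
    (hind : iIndepFun ![X, Y, T] μ) :
    1 - lam * ∫ ω, min (X ω + Y ω) (T ω) ∂μ = (u / (lam + u)) * (c / (lam + c)) :=
  single_cache_freshness_general μ lam c u hlam hc hu X Y T hXm hYm hTm hX hY hT hind
end

section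
/- Let λ, c₁, c₂, u₁, u₂ > 0 with c₁ ≠ u₁, c₂ ≠ u₂. Define the two-cache freshness F₂(c₁,c₂,u₁,u₂) = (u₁+u₂)(c₁+c₂)/((λ+u₁+u₂)(λ+c₁+c₂)) − (λ/((λ+u₁+u₂)(λ+c₁+c₂)))·(u₂c₁/(λ+u₁+c₂) + u₁c₂/(λ+u₂+c₁)), and the single-cache freshness F₁(c,u) = (u/(λ+u))·(c/(λ+c)). Then F₂(c₁,c₂,u₁,u₂) < F₁(c₁+c₂, u₁+u₂). -/
/-- Consolidating the rates of two parallel routes into a single route strictly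
increases freshness: the two-cache freshness `F₂(c₁,c₂,u₁,u₂)` is strictly
smaller than the single-cache freshness `F₁(c₁+c₂, u₁+u₂)`. -/
theorem two_cache_lt_consolidated_single_cache (lam c1 c2 u1 u2 : ℝ)
    (hlam : 0 < lam) (hc1 : 0 < c1) (hc2 : 0 < c2) (hu1 : 0 < u1) (hu2 : 0 < u2)
    (hcu1 : c1 ≠ u1) (hcu2 : c2 ≠ u2) :
    (u1 + u2) * (c1 + c2) / ((lam + u1 + u2) * (lam + c1 + c2)) -
        lam / ((lam + u1 + u2) * (lam + c1 + c2)) *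
          (u2 * c1 / (lam + u1 + c2) + u1 * c2 / (lam + u2 + c1)) <
      ((u1 + u2) / (lam + (u1 + u2))) * ((c1 + c2) / (lam + (c1 + c2))) := by
  have h1 : (0:ℝ) < lam + u1 + u2 := by linarith
  have h2 : (0:ℝ) < lam + c1 + c2 := by linarith
  have h3 : (0:ℝ) < lam + u1 + c2 := by linarith
  have h4 : (0:ℝ) < lam + u2 + c1 := by linarith
  have hrhs : ((u1 + u2) / (lam + (u1 + u2))) * ((c1 + c2) / (lam + (c1 + c2)))
      = (u1 + u2) * (c1 + c2) / ((lam + u1 + u2) * (lam + c1 + c2)) := by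
    field_simp; ring
  rw [hrhs]
  have hpos : 0 < lam / ((lam + u1 + u2) * (lam + c1 + c2)) *
      (u2 * c1 / (lam + u1 + c2) + u1 * c2 / (lam + u2 + c1)) := by positivity
  linarith
end

section
/- Fix λ > 0, average rates ū > 0 and c̄ > 0, and deviation b with 0 ≤ b < ū. Consider the two-cache freshness F(a) obtained from the two-cache formula with u₁ = ū−b, u₂ = ū+b, c₁ = c̄−a, c₂ = c̄+a as a function of a ∈ [0, c̄]. Then for b > 0 the unconstrained maximizer of F over a is a* = b + ((c̄+λ+ū)/(b(2c̄+λ)))·(ū(2c̄+λ+ū) − b² − √((ū²−b²)((2c̄+λ+ū)²−b²))), and the maximizer over [0, c̄] is min{a*, c̄}. -/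
/-- Two-cache freshness in mean-deviation coordinates:
`u₁ = ū−b, u₂ = ū+b, c₁ = c̄−a, c₂ = c̄+a`. -/
noncomputable def twoCacheFreshness (lam ub cb b a : ℝ) : ℝ :=
  4 * cb * ub / ((lam + 2 * cb) * (lam + 2 * ub)) -
    lam / ((lam + 2 * cb) * (lam + 2 * ub)) *
      ((ub - b) * (cb + a) / (cb + lam + ub + b - a) +
        (ub + b) * (cb - a) / (cb + lam + ub + a - b))

/-- The closed-form optimal cache-rate deviation `a*`. -/
noncomputable def aStar (lam ub cb b : ℝ) : ℝ :=
  b + (cb + lam + ub) / (b * (2 * cb + lam)) *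
    (ub * (2 * cb + lam + ub) - b ^ 2 -
      Real.sqrt ((ub ^ 2 - b ^ 2) * ((2 * cb + lam + ub) ^ 2 - b ^ 2)))

/-- Cauchy–Schwarz style lower bound for `A/x + B/y`. -/
lemma key_min (A B s t x y : ℝ) (hs : s ^ 2 = A) (ht : t ^ 2 = B)
    (hs0 : 0 ≤ s) (ht0 : 0 ≤ t) (hx : 0 < x) (hy : 0 < y) :
    (s + t) ^ 2 / (x + y) ≤ A / x + B / y := by
  subst hs; subst ht
  rw [div_add_div _ _ hx.ne' hy.ne', div_le_div_iff₀ (by positivity) (by positivity)]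
  nlinarith [sq_nonneg (s * y - t * x), mul_pos hx hy, mul_nonneg hs0 ht0]

/-- Monotonicity of `A/x + B/y` with `x + y` fixed, on the side of the optimum. -/
lemma key_mono (A B x1 y1 x2 y2 xs ys : ℝ) (hA : 0 < A) (hB : 0 < B)
    (hy1 : 0 < y1) (hxs : 0 < xs) (hx21 : x2 ≤ x1) (hxs2 : xs ≤ x2)
    (hs1 : x1 + y1 = xs + ys) (hs2 : x2 + y2 = xs + ys)
    (heq : A * ys ^ 2 = B * xs ^ 2) :
    A / x2 + B / y2 ≤ A / x1 + B / y1 := by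
  have hx2 : 0 < x2 := lt_of_lt_of_le hxs hxs2
  have hx1 : 0 < x1 := lt_of_lt_of_le hx2 hx21
  have hys : 0 < ys := by nlinarith
  have hy2 : 0 < y2 := by nlinarith
  have hy2s : y2 ≤ ys := by nlinarith
  have hy1s : y1 ≤ ys := by nlinarith
  have p1 : A * (y1 * y2) ≤ A * (ys * ys) :=
    mul_le_mul_of_nonneg_left (mul_le_mul hy1s hy2s hy2.le hys.le) hA.le
  have p2 : B * (xs * xs) ≤ B * (x1 * x2) :=
    mul_le_mul_of_nonneg_left (mul_le_mul (le_trans hxs2 hx21) hxs2 hxs.le hx1.le) hB.le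
  have key : A * (y1 * y2) ≤ B * (x1 * x2) := by nlinarith
  have hd : y2 - y1 = x1 - x2 := by linarith
  rw [div_add_div _ _ hx2.ne' hy2.ne', div_add_div _ _ hx1.ne' hy1.ne',
    div_le_div_iff₀ (by positivity) (by positivity)]
  nlinarith [mul_nonneg (sub_nonneg.mpr hx21) (sub_nonneg.mpr key),
    mul_pos (mul_pos hB hx1) hx2, hd]

/-- Comparison of freshness values via the reduced objective. -/
lemma F_le (lam ub cb b x y : ℝ) (hlam : 0 < lam)
    (hE : 0 < (lam + 2 * cb) * (lam + 2 * ub))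
    (hx1 : 0 < cb + lam + ub + b - x) (hx2 : 0 < cb + lam + ub + x - b)
    (hy1 : 0 < cb + lam + ub + b - y) (hy2 : 0 < cb + lam + ub + y - b)
    (hH : (ub - b) * (2 * cb + lam + ub + b) / (cb + lam + ub + b - y) +
          (ub + b) * (2 * cb + lam + ub - b) / (cb + lam + ub + y - b) ≤
          (ub - b) * (2 * cb + lam + ub + b) / (cb + lam + ub + b - x) +
          (ub + b) * (2 * cb + lam + ub - b) / (cb + lam + ub + x - b)) :
    twoCacheFreshness lam ub cb b x ≤ twoCacheFreshness lam ub cb b y := by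
  unfold twoCacheFreshness
  have hrw : ∀ a : ℝ, 0 < cb + lam + ub + b - a → 0 < cb + lam + ub + a - b →
      (ub - b) * (cb + a) / (cb + lam + ub + b - a) +
        (ub + b) * (cb - a) / (cb + lam + ub + a - b) =
      (ub - b) * (2 * cb + lam + ub + b) / (cb + lam + ub + b - a) +
        (ub + b) * (2 * cb + lam + ub - b) / (cb + lam + ub + a - b) - 2 * ub := by
    intro a h1 h2
    field_simp
    ring
  rw [hrw x hx1 hx2, hrw y hy1 hy2]
  have hc : 0 ≤ lam / ((lam + 2 * cb) * (lam + 2 * ub)) := by positivity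
  have := mul_le_mul_of_nonneg_left (sub_le_sub_right hH (2 * ub)) hc
  linarith

/-- For fixed user rates (`b > 0`) and fixed total cache rate, the two-cache
freshness as a function of the cache-rate deviation `a` is maximized (where the
formula is valid) at `a* = aStar lam ub cb b`, and over `[0, c̄]` at
`min a* c̄`. -/
theorem optimal_cache_rate_deviation (lam ub cb b : ℝ)
    (hlam : 0 < lam) (hub : 0 < ub) (hcb : 0 < cb) (hb : 0 < b) (hbu : b < ub) :
    IsMaxOn (fun a => twoCacheFreshness lam ub cb b a)
        {a : ℝ | |a - b| < cb + lam + ub} (aStar lam ub cb b) ∧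
      IsMaxOn (fun a => twoCacheFreshness lam ub cb b a)
        (Set.Icc 0 cb) (min (aStar lam ub cb b) cb) := by
  have hE : 0 < (lam + 2 * cb) * (lam + 2 * ub) := mul_pos (by linarith) (by linarith)
  have hAv : 0 < (ub - b) * (2 * cb + lam + ub + b) := mul_pos (by linarith) (by linarith)
  have hBv : 0 < (ub + b) * (2 * cb + lam + ub - b) := mul_pos (by linarith) (by linarith)
  obtain ⟨sA, hsA2, hsA⟩ : ∃ s : ℝ, s ^ 2 = (ub - b) * (2 * cb + lam + ub + b) ∧ 0 < s :=
    ⟨_, Real.sq_sqrt hAv.le, Real.sqrt_pos.mpr hAv⟩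
  obtain ⟨sB, hsB2, hsB⟩ : ∃ s : ℝ, s ^ 2 = (ub + b) * (2 * cb + lam + ub - b) ∧ 0 < s :=
    ⟨_, Real.sq_sqrt hBv.le, Real.sqrt_pos.mpr hBv⟩
  have hsAB : sA < sB := by nlinarith
  have hsum : (0:ℝ) < sA + sB := by linarith
  have hK : 0 < cb + lam + ub := by linarith
  have hS : Real.sqrt ((ub ^ 2 - b ^ 2) * ((2 * cb + lam + ub) ^ 2 - b ^ 2)) = sA * sB := by
    have h : (ub ^ 2 - b ^ 2) * ((2 * cb + lam + ub) ^ 2 - b ^ 2) = (sA * sB) ^ 2 := by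
      rw [mul_pow, hsA2, hsB2]; ring
    rw [h, Real.sqrt_sq (by positivity)]
  have hstar : aStar lam ub cb b = b + (cb + lam + ub) * (sB - sA) / (sA + sB) := by
    rw [aStar, hS,
      show ub * (2 * cb + lam + ub) - b ^ 2 - sA * sB = (sB - sA) ^ 2 / 2 by
        linear_combination (-(1:ℝ)/2) * hsA2 - (1/2 : ℝ) * hsB2,
      show b * (2 * cb + lam) = (sB - sA) * (sA + sB) / 2 by
        linear_combination ((1:ℝ)/2) * hsA2 - (1/2 : ℝ) * hsB2]
    have h1 : sB - sA ≠ 0 := sub_ne_zero_of_ne hsAB.ne'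
    field_simp
  have hD1 : cb + lam + ub + b - aStar lam ub cb b = 2 * (cb + lam + ub) * sA / (sA + sB) := by
    rw [hstar]; field_simp; ring
  have hD2 : cb + lam + ub + aStar lam ub cb b - b = 2 * (cb + lam + ub) * sB / (sA + sB) := by
    rw [hstar]; field_simp; ring
  have hD1pos : 0 < cb + lam + ub + b - aStar lam ub cb b := by rw [hD1]; positivity
  have hD2pos : 0 < cb + lam + ub + aStar lam ub cb b - b := by rw [hD2]; positivity
  have hHstar : (ub - b) * (2 * cb + lam + ub + b) / (cb + lam + ub + b - aStar lam ub cb b) +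
      (ub + b) * (2 * cb + lam + ub - b) / (cb + lam + ub + aStar lam ub cb b - b) =
      (sA + sB) ^ 2 / (2 * (cb + lam + ub)) := by
    rw [hD1, hD2, ← hsA2, ← hsB2]
    field_simp
  have part1 : IsMaxOn (fun a => twoCacheFreshness lam ub cb b a)
      {a : ℝ | |a - b| < cb + lam + ub} (aStar lam ub cb b) := by
    rw [isMaxOn_iff]
    intro x hx
    simp only [Set.mem_setOf_eq] at hx
    obtain ⟨hl, hr⟩ := abs_lt.mp hx
    have hx1 : 0 < cb + lam + ub + b - x := by linarith
    have hx2 : 0 < cb + lam + ub + x - b := by linarith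
    refine F_le lam ub cb b x (aStar lam ub cb b) hlam hE hx1 hx2 hD1pos hD2pos ?_
    rw [hHstar]
    calc (sA + sB) ^ 2 / (2 * (cb + lam + ub))
        = (sA + sB) ^ 2 / ((cb + lam + ub + b - x) + (cb + lam + ub + x - b)) := by
          rw [show (cb + lam + ub + b - x) + (cb + lam + ub + x - b) = 2 * (cb + lam + ub)
            from by ring]
      _ ≤ _ := key_min _ _ sA sB _ _ hsA2 hsB2 hsA.le hsB.le hx1 hx2
  refine ⟨part1, ?_⟩
  have hsubset : Set.Icc (0:ℝ) cb ⊆ {a : ℝ | |a - b| < cb + lam + ub} := by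
    intro x hx
    obtain ⟨h0, hc⟩ := hx
    simp only [Set.mem_setOf_eq]
    rw [abs_lt]
    constructor <;> linarith
  rcases le_or_gt (aStar lam ub cb b) cb with hcase | hcase
  · rw [min_eq_left hcase]
    exact part1.on_subset hsubset
  · rw [min_eq_right hcase.le]
    rw [isMaxOn_iff]
    intro x hx
    obtain ⟨h0, hc⟩ := hx
    have hx1 : 0 < cb + lam + ub + b - x := by linarith
    have hx2 : 0 < cb + lam + ub + x - b := by linarith
    have hc1 : 0 < cb + lam + ub + b - cb := by linarith
    have hc2 : 0 < cb + lam + ub + cb - b := by linarith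
    refine F_le lam ub cb b x cb hlam hE hx1 hx2 hc1 hc2 ?_
    have heq : (ub - b) * (2 * cb + lam + ub + b) * (cb + lam + ub + aStar lam ub cb b - b) ^ 2 =
        (ub + b) * (2 * cb + lam + ub - b) * (cb + lam + ub + b - aStar lam ub cb b) ^ 2 := by
      rw [hD1, hD2, ← hsA2, ← hsB2]
      field_simp
    exact key_mono _ _ (cb + lam + ub + b - x) (cb + lam + ub + x - b)
      (cb + lam + ub + b - cb) (cb + lam + ub + cb - b)
      (cb + lam + ub + b - aStar lam ub cb b) (cb + lam + ub + aStar lam ub cb b - b)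
      hAv hBv hx2 hD1pos (by linarith) (by linarith) (by ring) (by ring) heq
end

section
/- With F(a, b) the two-cache freshness in mean-deviation coordinates (fixed λ, ū, c̄ > 0), the second partial derivative of F with respect to a at the interior critical point a* is strictly negative; hence a* is a local maximum of a ↦ F(a, b). -/
/-!
Splitting off partial fractions, `F(a, b) = C - K (P / (p - a) + Q / (q + a))` near `a*`, with
`K, P, Q > 0` and `p - a`, `q + a` the two denominators of `F`. The bracket is convex on
`(-q, p)` with its critical point where `√P (q + a) = √Q (p - a)`, and rationalising the closed
form of `a*` shows that `a*` is exactly this point. So the second derivative of `F` there is `-K`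
times a positive number, and the second-derivative test gives the local maximum.
-/

open Filter Topology

section ReciprocalPair

variable (P Q p q : ℝ) {a : ℝ}

theorem hasDerivAt_div_sub_add_div_add (hp : p - a ≠ 0) (hq : q + a ≠ 0) :
    HasDerivAt (fun x => P / (p - x) + Q / (q + x)) (P / (p - a) ^ 2 - Q / (q + a) ^ 2) a := by
  have hp' : HasDerivAt (fun x => p - x) (-1) a := by
    simpa using (hasDerivAt_id a).const_sub p
  have hq' : HasDerivAt (fun x => q + x) 1 a := by
    simpa using (hasDerivAt_id a).const_add q
  refine (((hasDerivAt_const a P).fun_div hp' hp).fun_add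
    ((hasDerivAt_const a Q).fun_div hq' hq)).congr_deriv ?_
  field_simp
  ring

theorem hasDerivAt_div_sub_sq_sub_div_add_sq (hp : p - a ≠ 0) (hq : q + a ≠ 0) :
    HasDerivAt (fun x => P / (p - x) ^ 2 - Q / (q + x) ^ 2)
      (2 * P / (p - a) ^ 3 + 2 * Q / (q + a) ^ 3) a := by
  have hp' : HasDerivAt (fun x => (p - x) ^ 2) (-(2 * (p - a))) a := by
    simpa using ((hasDerivAt_id a).const_sub p).fun_pow 2
  have hq' : HasDerivAt (fun x => (q + x) ^ 2) (2 * (q + a)) a := by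
    simpa using ((hasDerivAt_id a).const_add q).fun_pow 2
  refine (((hasDerivAt_const a P).fun_div hp' (pow_ne_zero 2 hp)).fun_sub
    ((hasDerivAt_const a Q).fun_div hq' (pow_ne_zero 2 hq))).congr_deriv ?_
  field_simp
  ring

theorem deriv_deriv_div_sub_add_div_add (hp : p - a ≠ 0) (hq : q + a ≠ 0) :
    deriv (deriv fun x => P / (p - x) + Q / (q + x)) a =
      2 * P / (p - a) ^ 3 + 2 * Q / (q + a) ^ 3 := by
  have hderiv : deriv (fun x => P / (p - x) + Q / (q + x)) =ᶠ[𝓝 a]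
      fun x => P / (p - x) ^ 2 - Q / (q + x) ^ 2 := by
    filter_upwards [(continuous_const.sub continuous_id).continuousAt.eventually_ne hp,
      (continuous_const.add continuous_id).continuousAt.eventually_ne hq] with x hpx hqx
    exact (hasDerivAt_div_sub_add_div_add P Q p q hpx hqx).deriv
  rw [hderiv.deriv_eq]
  exact (hasDerivAt_div_sub_sq_sub_div_add_sq P Q p q hp hq).deriv

end ReciprocalPair

noncomputable def balancePoint (s t p q : ℝ) : ℝ := (t * p - s * q) / (s + t)

section BalancePoint

variable {s t p q : ℝ}

theorem sub_balancePoint (hst : s + t ≠ 0) :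
    p - balancePoint s t p q = s * (p + q) / (s + t) := by
  rw [balancePoint]
  field_simp
  ring

theorem add_balancePoint (hst : s + t ≠ 0) :
    q + balancePoint s t p q = t * (p + q) / (s + t) := by
  rw [balancePoint]
  field_simp
  ring

variable (hs : 0 < s) (ht : 0 < t) (hpq : 0 < p + q)
include hs ht hpq

theorem balancePoint_lt : balancePoint s t p q < p := by
  rw [← sub_pos, sub_balancePoint (by positivity)]
  positivity

theorem neg_lt_balancePoint : -q < balancePoint s t p q := by
  rw [neg_lt_iff_pos_add', add_balancePoint (by positivity)]
  positivity

theorem hasDerivAt_sq_div_sub_add_sq_div_add_balancePoint :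
    HasDerivAt (fun x => s ^ 2 / (p - x) + t ^ 2 / (q + x)) 0 (balancePoint s t p q) := by
  have hst : s + t ≠ 0 := by positivity
  have hp := (sub_pos.2 (balancePoint_lt hs ht hpq)).ne'
  have hq := (neg_lt_iff_pos_add'.1 (neg_lt_balancePoint hs ht hpq)).ne'
  refine (hasDerivAt_div_sub_add_div_add (s ^ 2) (t ^ 2) p q hp hq).congr_deriv ?_
  rw [sub_balancePoint hst, add_balancePoint hst]
  field_simp
  ring

theorem deriv_deriv_sq_div_sub_add_sq_div_add_balancePoint_pos :
    0 < deriv (deriv fun x => s ^ 2 / (p - x) + t ^ 2 / (q + x)) (balancePoint s t p q) := by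
  have hst : s + t ≠ 0 := by positivity
  have hp := (sub_pos.2 (balancePoint_lt hs ht hpq)).ne'
  have hq := (neg_lt_iff_pos_add'.1 (neg_lt_balancePoint hs ht hpq)).ne'
  rw [deriv_deriv_div_sub_add_div_add _ _ _ _ hp hq, sub_balancePoint hst,
    add_balancePoint hst]
  positivity

end BalancePoint

theorem deriv_deriv_neg_and_isLocalMax_of_eventuallyEq {f g : ℝ → ℝ} {C K x₀ : ℝ} (hK : 0 < K)
    (hfg : f =ᶠ[𝓝 x₀] fun x => C - K * g x) (hg : HasDerivAt g 0 x₀)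
    (hg₂ : 0 < deriv (deriv g) x₀) :
    deriv (deriv f) x₀ < 0 ∧ IsLocalMax f x₀ := by
  have hderiv : deriv f =ᶠ[𝓝 x₀] fun x => -(K * deriv g x) := by
    refine hfg.deriv.trans (Eventually.of_forall fun x => ?_)
    simp only [deriv_const_sub, deriv_const_mul_field']
  have hf₂ : deriv (deriv f) x₀ < 0 := by
    rw [hderiv.deriv_eq, deriv.fun_neg, deriv_const_mul_field']
    exact neg_neg_of_pos (mul_pos hK hg₂)
  refine ⟨hf₂, isLocalMax_of_deriv_deriv_neg hf₂ ?_ ?_⟩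
  · rw [hderiv.eq_of_nhds, hg.deriv, mul_zero, neg_zero]
  · exact ContinuousAt.congr_of_eventuallyEq
      (continuousAt_const.sub (hg.continuousAt.const_mul K)) hfg

theorem twoCacheFreshness_eq {lam ub cb b a : ℝ} (h₁ : cb + lam + ub + b - a ≠ 0)
    (h₂ : cb + lam + ub + a - b ≠ 0) :
    twoCacheFreshness lam ub cb b a =
      (4 * cb * ub + 2 * lam * ub) / ((lam + 2 * cb) * (lam + 2 * ub)) -
        lam / ((lam + 2 * cb) * (lam + 2 * ub)) *
          ((ub - b) * (2 * cb + lam + ub + b) / (cb + lam + ub + b - a) +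
            (ub + b) * (2 * cb + lam + ub - b) / (cb + lam + ub - b + a)) := by
  have hsplit : (ub - b) * (cb + a) / (cb + lam + ub + b - a) +
      (ub + b) * (cb - a) / (cb + lam + ub + a - b) =
      (ub - b) * (2 * cb + lam + ub + b) / (cb + lam + ub + b - a) +
        (ub + b) * (2 * cb + lam + ub - b) / (cb + lam + ub - b + a) - 2 * ub := by
    rw [show cb + lam + ub - b + a = cb + lam + ub + a - b by ring]
    field_simp
    ring
  rw [twoCacheFreshness, hsplit]
  ring

theorem aStar_eq_balancePoint {lam ub cb b : ℝ} (hcl : 0 < 2 * cb + lam) (hb : 0 < b)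
    (hbu : b < ub) :
    aStar lam ub cb b =
      balancePoint √((ub - b) * (2 * cb + lam + ub + b)) √((ub + b) * (2 * cb + lam + ub - b))
        (cb + lam + ub + b) (cb + lam + ub - b) := by
  set P := (ub - b) * (2 * cb + lam + ub + b)
  set Q := (ub + b) * (2 * cb + lam + ub - b)
  have hP : 0 < P := mul_pos (by linarith) (by linarith)
  have hQ : 0 < Q := mul_pos (by linarith) (by linarith)
  have hs : √P ^ 2 = P := Real.sq_sqrt hP.le
  have ht : √Q ^ 2 = Q := Real.sq_sqrt hQ.le
  have hst : √P < √Q := Real.sqrt_lt_sqrt hP.le (by nlinarith)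
  have hsum : ub * (2 * cb + lam + ub) - b ^ 2 = (√P ^ 2 + √Q ^ 2) / 2 := by
    rw [hs, ht]; ring
  have hdiff : b * (2 * cb + lam) = (√Q - √P) * (√P + √Q) / 2 := by
    rw [show (√Q - √P) * (√P + √Q) = √Q ^ 2 - √P ^ 2 by ring, hs, ht]; ring
  have hprod : (ub ^ 2 - b ^ 2) * ((2 * cb + lam + ub) ^ 2 - b ^ 2) = P * Q := by ring
  rw [aStar, balancePoint, hsum, hdiff, hprod, Real.sqrt_mul hP.le]
  have hst' : √Q - √P ≠ 0 := sub_ne_zero.2 hst.ne'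
  have hs' : 0 < √P := Real.sqrt_pos.2 hP
  field_simp
  ring

theorem second_derivative_negative_at_aStar_general (lam ub cb b : ℝ)
    (hlam : 0 < lam) (hcb : 0 < cb) (hb : 0 < b) (hbu : b < ub) :
    deriv (deriv (fun a => twoCacheFreshness lam ub cb b a)) (aStar lam ub cb b) < 0 ∧
      IsLocalMax (fun a => twoCacheFreshness lam ub cb b a) (aStar lam ub cb b) := by
  have hP : 0 < (ub - b) * (2 * cb + lam + ub + b) := mul_pos (by linarith) (by linarith)
  have hQ : 0 < (ub + b) * (2 * cb + lam + ub - b) := mul_pos (by linarith) (by linarith)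
  have hpq : 0 < (cb + lam + ub + b) + (cb + lam + ub - b) := by linarith
  have hs := Real.sqrt_pos.2 hP
  have ht := Real.sqrt_pos.2 hQ
  rw [aStar_eq_balancePoint (by linarith) hb hbu]
  refine deriv_deriv_neg_and_isLocalMax_of_eventuallyEq
    (C := (4 * cb * ub + 2 * lam * ub) / ((lam + 2 * cb) * (lam + 2 * ub)))
    (K := lam / ((lam + 2 * cb) * (lam + 2 * ub)))
    (div_pos hlam (mul_pos (by linarith) (by linarith))) ?_
    (hasDerivAt_sq_div_sub_add_sq_div_add_balancePoint hs ht hpq)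
    (deriv_deriv_sq_div_sub_add_sq_div_add_balancePoint_pos hs ht hpq)
  filter_upwards [eventually_lt_nhds (balancePoint_lt hs ht hpq),
    eventually_gt_nhds (neg_lt_balancePoint hs ht hpq)] with a hap haq
  rw [twoCacheFreshness_eq (by linarith) (by linarith), Real.sq_sqrt hP.le, Real.sq_sqrt hQ.le]

/-- The second partial derivative of the two-cache freshness with respect to
`a` at the interior critical point `a*` is strictly negative; hence `a*` is a
local maximum of `a ↦ F(a, b)`. -/
theorem second_derivative_negative_at_aStar (lam ub cb b : ℝ)
    (hlam : 0 < lam) (hub : 0 < ub) (hcb : 0 < cb) (hb : 0 < b) (hbu : b < ub) :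
    deriv (deriv (fun a => twoCacheFreshness lam ub cb b a)) (aStar lam ub cb b) < 0 ∧
      IsLocalMax (fun a => twoCacheFreshness lam ub cb b a) (aStar lam ub cb b) :=
  second_derivative_negative_at_aStar_general lam ub cb b hlam hcb hb hbu
end

section
/- Fix λ, ū, c̄ > 0. Define the cache-optimized freshness F̃(b) = max_{a ∈ [0, c̄]} F(a, b), where F(a,b) is the two-cache freshness in mean-deviation coordinates. Then F̃ is strictly increasing in b on [0, ū). -/
lemma diag_lt (lam ub cb a b t : ℝ) (hlam : 0 < lam) (hub : 0 < ub) (hcb : 0 < cb)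
    (ha : 0 ≤ a) (hacb : a ≤ cb) (hb : 0 ≤ b) (hbub : b < ub) (ht : 0 < t) :
    twoCacheFreshness lam ub cb b a < twoCacheFreshness lam ub cb (b + t) (a + t) := by
  have hd1 : 0 < cb + lam + ub + b - a := by linarith
  have hd2 : 0 < cb + lam + ub + a - b := by linarith
  have hD1 : 0 < lam + 2 * cb := by linarith
  have hD2 : 0 < lam + 2 * ub := by linarith
  have key : twoCacheFreshness lam ub cb (b + t) (a + t) - twoCacheFreshness lam ub cb b a =
      lam * (2 * t * (a * (lam + 2 * cb) + b * (lam + 2 * ub) + t * (cb + lam + ub))) /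
        ((lam + 2 * cb) * (lam + 2 * ub) * ((cb + lam + ub + b - a) * (cb + lam + ub + a - b))) := by
    unfold twoCacheFreshness
    have e1 : cb + lam + ub + (b + t) - (a + t) = cb + lam + ub + b - a := by ring
    have e2 : cb + lam + ub + (a + t) - (b + t) = cb + lam + ub + a - b := by ring
    rw [e1, e2]
    field_simp
    ring
  nlinarith [key, div_pos (mul_pos hlam (by nlinarith [mul_nonneg ha hD1.le, mul_nonneg hb hD2.le, mul_pos ht (show (0:ℝ) < cb + lam + ub by linarith)] : (0:ℝ) < 2 * t * (a * (lam + 2 * cb) + b * (lam + 2 * ub) + t * (cb + lam + ub))))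
    (by positivity : (0:ℝ) < (lam + 2 * cb) * (lam + 2 * ub) * ((cb + lam + ub + b - a) * (cb + lam + ub + a - b)))]

lemma vert_lt (lam ub cb b b' : ℝ) (hlam : 0 < lam) (hub : 0 < ub) (hcb : 0 < cb)
    (hb : 0 ≤ b) (hbb : b < b') (hb'ub : b' < ub) :
    twoCacheFreshness lam ub cb b cb < twoCacheFreshness lam ub cb b' cb := by
  have hd1 : 0 < lam + ub + b := by linarith
  have hd1' : 0 < lam + ub + b' := by linarith
  have hD1 : 0 < lam + 2 * cb := by linarith
  have hD2 : 0 < lam + 2 * ub := by linarith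
  have key : twoCacheFreshness lam ub cb b' cb - twoCacheFreshness lam ub cb b cb =
      lam * (2 * cb * ((b' - b) * (lam + 2 * ub))) /
        ((lam + 2 * cb) * (lam + 2 * ub) * ((lam + ub + b) * (lam + ub + b'))) := by
    unfold twoCacheFreshness
    have e1 : cb + lam + ub + b - cb = lam + ub + b := by ring
    have e1' : cb + lam + ub + b' - cb = lam + ub + b' := by ring
    rw [e1, e1']
    field_simp
    ring
  nlinarith [key, div_pos (mul_pos hlam (by nlinarith [mul_pos (show (0:ℝ) < b' - b by linarith) hD2] : (0:ℝ) < 2 * cb * ((b' - b) * (lam + 2 * ub))))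
    (by positivity : (0:ℝ) < (lam + 2 * cb) * (lam + 2 * ub) * ((lam + ub + b) * (lam + ub + b')))]

/-- Cache-update-rate-optimized freshness: the maximum of the two-cache
freshness over cache-rate deviations `a ∈ [0, c̄]`. -/
noncomputable def optimizedFreshness (lam ub cb b : ℝ) : ℝ :=
  sSup ((fun a => twoCacheFreshness lam ub cb b a) '' Set.Icc 0 cb)

/-- The cache-optimized freshness is strictly increasing in the user-rate
deviation `b` on `[0, ū)`: more lopsided user rates yield higher freshness. -/
theorem optimized_freshness_strictMono (lam ub cb : ℝ)
    (hlam : 0 < lam) (hub : 0 < ub) (hcb : 0 < cb) :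
    StrictMonoOn (fun b => optimizedFreshness lam ub cb b) (Set.Ico 0 ub) := by
  intro b1 hb1 b2 hb2 hlt
  have hcont : ∀ b ∈ Set.Ico (0:ℝ) ub,
      ContinuousOn (fun a => twoCacheFreshness lam ub cb b a) (Set.Icc 0 cb) := by
    intro b hb
    unfold twoCacheFreshness
    apply ContinuousOn.sub continuousOn_const
    apply ContinuousOn.mul continuousOn_const
    apply ContinuousOn.add
    · exact ContinuousOn.div (by fun_prop) (by fun_prop)
        (fun a ha => by
          have h1 := ha.1; have h2 := ha.2; have h3 := hb.1; have h4 := hb.2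
          have : (0:ℝ) < cb + lam + ub + b - a := by linarith
          exact this.ne')
    · exact ContinuousOn.div (by fun_prop) (by fun_prop)
        (fun a ha => by
          have h1 := ha.1; have h2 := ha.2; have h3 := hb.1; have h4 := hb.2
          have : (0:ℝ) < cb + lam + ub + a - b := by linarith
          exact this.ne')
  have hne : (Set.Icc (0:ℝ) cb).Nonempty := ⟨0, by simp [hcb.le]⟩
  obtain ⟨a1, ha1mem, ha1max⟩ := isCompact_Icc.exists_isMaxOn hne (hcont b1 hb1)
  have hbdd1 : BddAbove ((fun a => twoCacheFreshness lam ub cb b1 a) '' Set.Icc 0 cb) :=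
    (isCompact_Icc.image_of_continuousOn (hcont b1 hb1)).bddAbove
  have hbdd2 : BddAbove ((fun a => twoCacheFreshness lam ub cb b2 a) '' Set.Icc 0 cb) :=
    (isCompact_Icc.image_of_continuousOn (hcont b2 hb2)).bddAbove
  have hsup1 : optimizedFreshness lam ub cb b1 = twoCacheFreshness lam ub cb b1 a1 := by
    apply le_antisymm
    · apply csSup_le (hne.image _)
      rintro y ⟨a, hamem, rfl⟩
      exact ha1max hamem
    · exact le_csSup hbdd1 (Set.mem_image_of_mem _ ha1mem)
  have key : ∃ a2 ∈ Set.Icc (0:ℝ) cb,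
      twoCacheFreshness lam ub cb b1 a1 < twoCacheFreshness lam ub cb b2 a2 := by
    by_cases hcase : b2 - b1 ≤ cb - a1
    · refine ⟨a1 + (b2 - b1), ⟨by linarith [ha1mem.1, hb1.1], by linarith⟩, ?_⟩
      have h := diag_lt lam ub cb a1 b1 (b2 - b1) hlam hub hcb ha1mem.1 ha1mem.2 hb1.1 hb1.2
        (by linarith)
      have e : b1 + (b2 - b1) = b2 := by ring
      rwa [e] at h
    · push_neg at hcase
      refine ⟨cb, ⟨hcb.le, le_refl cb⟩, ?_⟩
      rcases eq_or_lt_of_le ha1mem.2 with heq | hlt2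
      · rw [heq]
        exact vert_lt lam ub cb b1 b2 hlam hub hcb hb1.1 hlt hb2.2
      · have h1 := diag_lt lam ub cb a1 b1 (cb - a1) hlam hub hcb ha1mem.1 ha1mem.2 hb1.1 hb1.2
          (by linarith)
        have e : a1 + (cb - a1) = cb := by ring
        rw [e] at h1
        have h2 := vert_lt lam ub cb (b1 + (cb - a1)) b2 hlam hub hcb (by linarith [hb1.1])
          (by linarith) hb2.2
        exact h1.trans h2
  obtain ⟨a2, ha2mem, hlt2⟩ := key
  calc optimizedFreshness lam ub cb b1 = twoCacheFreshness lam ub cb b1 a1 := hsup1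
    _ < twoCacheFreshness lam ub cb b2 a2 := hlt2
    _ ≤ optimizedFreshness lam ub cb b2 := le_csSup hbdd2 (Set.mem_image_of_mem _ ha2mem)
end

section
/- Let λ, ū, c̄ > 0. In the two-cache freshness F(a,b) in mean-deviation coordinates, F evaluated at the fully consolidated point (a,b) = (c̄, ū) equals the single-cache freshness (2ū/(λ+2ū))·(2c̄/(λ+2c̄)), and the relative freshness loss ρ = (F(c̄,ū) − F(0,0))/F(c̄,ū) of the balanced point (a,b) = (0,0) equals λ/(2(λ+ū+c̄)); hence ρ < 1/2. -/
/-- At the fully consolidated point `(a, b) = (c̄, ū)` the two-cache freshness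
equals the single-cache freshness `(2ū/(λ+2ū))·(2c̄/(λ+2c̄))`, and the relative
freshness loss of the balanced point `(a, b) = (0, 0)` is
`ρ = λ/(2(λ+ū+c̄)) < 1/2`. -/
theorem freshness_loss_ratio (lam ub cb : ℝ)
    (hlam : 0 < lam) (hub : 0 < ub) (hcb : 0 < cb) :
    twoCacheFreshness lam ub cb ub cb =
        (2 * ub / (lam + 2 * ub)) * (2 * cb / (lam + 2 * cb)) ∧
      (twoCacheFreshness lam ub cb ub cb - twoCacheFreshness lam ub cb 0 0) /
          twoCacheFreshness lam ub cb ub cb =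
        lam / (2 * (lam + ub + cb)) ∧
      lam / (2 * (lam + ub + cb)) < 1 / 2 := by
  have h1 : lam + 2 * cb ≠ 0 := by positivity
  have h2 : lam + 2 * ub ≠ 0 := by positivity
  have h3 : cb + lam + ub ≠ 0 := by positivity
  have h4 : cb + lam + ub + ub - cb ≠ 0 := by
    have : cb + lam + ub + ub - cb = lam + 2 * ub := by ring
    rw [this]; exact h2
  have h5 : cb + lam + ub + cb - ub ≠ 0 := by
    have : cb + lam + ub + cb - ub = lam + 2 * cb := by ring
    rw [this]; exact h1
  have hF : twoCacheFreshness lam ub cb ub cb =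
      (2 * ub / (lam + 2 * ub)) * (2 * cb / (lam + 2 * cb)) := by
    unfold twoCacheFreshness
    field_simp
    ring
  refine ⟨hF, ?_, ?_⟩
  · rw [hF]
    unfold twoCacheFreshness
    have h6 : lam + ub + cb ≠ 0 := by positivity
    have hcu : cb * ub ≠ 0 := by positivity
    have h7 : ub + cb + lam ≠ 0 := by positivity
    simp only [add_zero, sub_zero]
    field_simp
    ring
  · rw [div_lt_div_iff₀ (by positivity) (by norm_num)]
    nlinarith
end

section
/- Let t > 0 and let X₁, …, X_K be independent nonnegative random variables where X_k = A_k + B_k with A_k ~ Exp(c_k), B_k ~ Exp(u_k) independent, all rates positive, c_k ≠ u_k. Then E[min(t, X₁, X₂, X₃, …, X_K)] ≥ E[min(t, X', X₃, …, X_K)], where X' = A' + B' with A' ~ Exp(c₁+c₂), B' ~ Exp(u₁+u₂) independent of the other variables. Consequently, merging two parallel routes into one route with summed rates decreases the expected user waiting time. -/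
open MeasureTheory ProbabilityTheory

/-!
The minimum of independent `Exp(a)` and `Exp(b)` variables is `Exp(a + b)`. Hence
`Z = min(A₁, A₂) + min(B₁, B₂)` has the law of the merged route time `A' + B'`, and both are
independent of the remaining routes, so substituting `Z` for `A' + B'` does not change the
expected waiting time. On the other hand `Z ≤ min(A₁ + B₁, A₂ + B₂)` pointwise, and the waiting
time `min(t, X₁, …, X_K)` is monotone in the route times.
-/

namespace ProbabilityTheory

variable {Ω : Type*} {mΩ : MeasurableSpace Ω} {P : Measure Ω}

instance sigmaFinite_expMeasure (r : ℝ) : SigmaFinite (expMeasure r) := by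
  unfold expMeasure gammaMeasure gammaPDF
  infer_instance

lemma expMeasure_Iio_zero (r : ℝ) : expMeasure r (Set.Iio 0) = 0 := by
  rw [expMeasure, gammaMeasure, withDensity_apply _ measurableSet_Iio]
  exact lintegral_gammaPDF_of_nonpos le_rfl

lemma expMeasure_Ioi_s11 {r : ℝ} (hr : 0 < r) (x : ℝ) :
    expMeasure r (Set.Ioi x) = ENNReal.ofReal (Real.exp (-(r * max x 0))) := by
  have := isProbabilityMeasure_expMeasure hr
  rw [← Set.compl_Iic, prob_compl_eq_one_sub measurableSet_Iic, ← ofReal_cdf,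
    ← ENNReal.ofReal_one, ← ENNReal.ofReal_sub _ (cdf_nonneg _ _), cdf_expMeasure_eq hr]
  split_ifs with hx
  · rw [max_eq_left hx, sub_sub_cancel]
  · rw [max_eq_right (not_le.1 hx).le]
    simp

lemma HasLaw.ae_nonneg_of_expMeasure {X : Ω → ℝ} {r : ℝ} (hX : HasLaw X (expMeasure r) P) :
    0 ≤ᵐ[P] X := by
  refine (hX.ae_iff (p := (0 ≤ ·)) measurableSet_Ici.mem).2 (ae_iff.2 ?_)
  simp only [not_le]
  exact expMeasure_Iio_zero r

lemma IndepFun.hasLaw_min_expMeasure [IsProbabilityMeasure P] {X Y : Ω → ℝ} {a b : ℝ}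
    (ha : 0 < a) (hb : 0 < b) (hX : HasLaw X (expMeasure a) P) (hY : HasLaw Y (expMeasure b) P)
    (hXY : IndepFun X Y P) : HasLaw (fun ω ↦ min (X ω) (Y ω)) (expMeasure (a + b)) P where
  map_eq := by
    have hmin := hX.aemeasurable.min hY.aemeasurable
    have := isProbabilityMeasure_expMeasure (add_pos ha hb)
    have := Measure.isProbabilityMeasure_map hmin
    refine Measure.ext_of_Iic _ _ fun x ↦ ?_
    rw [← Set.compl_Ioi, prob_compl_eq_one_sub measurableSet_Ioi,
      prob_compl_eq_one_sub measurableSet_Ioi,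
      Measure.map_apply_of_aemeasurable hmin measurableSet_Ioi]
    have hpre : (fun ω ↦ min (X ω) (Y ω)) ⁻¹' Set.Ioi x = X ⁻¹' Set.Ioi x ∩ Y ⁻¹' Set.Ioi x := by
      ext
      simp
    rw [hpre, hXY.measure_inter_preimage_eq_mul _ _ measurableSet_Ioi measurableSet_Ioi,
      ← Measure.map_apply_of_aemeasurable hX.aemeasurable measurableSet_Ioi,
      ← Measure.map_apply_of_aemeasurable hY.aemeasurable measurableSet_Ioi,
      hX.map_eq, hY.map_eq, expMeasure_Ioi_s11 ha, expMeasure_Ioi_s11 hb, expMeasure_Ioi_s11 (add_pos ha hb),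
      ← ENNReal.ofReal_mul (Real.exp_nonneg _), ← Real.exp_add]
    ring_nf

lemma measurable_iSup_comap_of_mem {ι : Type*} {β : ι → Type*} {mβ : ∀ i, MeasurableSpace (β i)}
    {F : ∀ i, Ω → β i} {S : Set ι} {i : ι} (hi : i ∈ S) :
    Measurable[⨆ j ∈ S, (mβ j).comap (F j)] (F i) :=
  (comap_measurable (F i)).mono (le_iSup₂ (f := fun j _ ↦ (mβ j).comap (F j)) i hi) le_rfl

lemma iIndepFun.indepFun_of_measurable_iSup {ι : Type*} {β : ι → Type*}
    {mβ : ∀ i, MeasurableSpace (β i)} {F : ∀ i, Ω → β i} (hF : iIndepFun F P)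
    (hFm : ∀ i, Measurable (F i)) {S T : Set ι} (hST : Disjoint S T) {γ δ : Type*}
    [MeasurableSpace γ] [MeasurableSpace δ] {f : Ω → γ} {g : Ω → δ}
    (hf : Measurable[⨆ i ∈ S, (mβ i).comap (F i)] f)
    (hg : Measurable[⨆ i ∈ T, (mβ i).comap (F i)] g) : IndepFun f g P :=
  (IndepFun_iff_Indep f g P).2 <| indep_of_indep_of_le
    (indep_iSup_of_disjoint (fun i ↦ (hFm i).comap_le) hF.iIndep hST) hf.comap_le hg.comap_le

lemma IndepFun.integral_comp_prodMk_eq [IsFiniteMeasure P] {E 𝓧 𝓨 : Type*}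
    [NormedAddCommGroup E] [NormedSpace ℝ E] [MeasurableSpace 𝓧] [MeasurableSpace 𝓨]
    {ν : Measure 𝓧} {X X' : Ω → 𝓧} {Y : Ω → 𝓨} (hXY : IndepFun X Y P) (hX'Y : IndepFun X' Y P)
    (hX : HasLaw X ν P) (hX' : HasLaw X' ν P) (hY : AEMeasurable Y P) {g : 𝓧 × 𝓨 → E}
    (hg : AEStronglyMeasurable g (ν.prod (P.map Y))) :
    ∫ ω, g (X ω, Y ω) ∂P = ∫ ω, g (X' ω, Y ω) ∂P :=
  have hY' : HasLaw Y (P.map Y) P := ⟨hY, rfl⟩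
  ((hXY.hasLaw_prod hX hY').integral_comp hg).trans
    ((hX'Y.hasLaw_prod hX' hY').integral_comp hg).symm

lemma integrable_min_iInf [IsFiniteMeasure P] {ι : Type*} [Countable ι] {X : ι → Ω → ℝ}
    (hXm : ∀ i, AEMeasurable (X i) P) (hX0 : ∀ᵐ ω ∂P, ∀ i, 0 ≤ X i ω) (t : ℝ) :
    Integrable (fun ω ↦ min t (⨅ i, X i ω)) P :=
  .of_bound (aemeasurable_const.min (.iInf hXm)).aestronglyMeasurable |t| <| hX0.mono fun _ hω ↦
    abs_le.2 ⟨le_min (neg_abs_le t) ((neg_nonpos.2 (abs_nonneg t)).trans (Real.iInf_nonneg hω)),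
      (min_le_left _ _).trans (le_abs_self t)⟩

lemma integral_min_iInf_ite_le [IsFiniteMeasure P] {ι : Type*} [Finite ι] (p : ι → Prop)
    [DecidablePred p] {X : ι → Ω → ℝ} {Z Z' : Ω → ℝ} {ν : Measure ℝ}
    (hXm : ∀ i, Measurable (X i)) (hX0 : ∀ᵐ ω ∂P, ∀ i, 0 ≤ X i ω) (hZ : HasLaw Z ν P)
    (hZ' : HasLaw Z' ν P) (hZ0 : 0 ≤ᵐ[P] Z) (hZX : ∀ i, p i → Z ≤ X i)
    (hZR : IndepFun Z (fun ω i ↦ if p i then 0 else X i ω) P)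
    (hZ'R : IndepFun Z' (fun ω i ↦ if p i then 0 else X i ω) P) (t : ℝ) :
    ∫ ω, min t (⨅ i, if p i then Z' ω else X i ω) ∂P ≤ ∫ ω, min t (⨅ i, X i ω) ∂P := by
  set R : Ω → ι → ℝ := fun ω i ↦ if p i then 0 else X i ω
  have hR : Measurable R := measurable_pi_lambda _ fun i ↦ by
    dsimp only [R]
    split_ifs
    exacts [measurable_const, hXm i]
  let g : ℝ × (ι → ℝ) → ℝ := fun q ↦ min t (⨅ i, if p i then q.1 else q.2 i)
  have hg : Measurable g := measurable_const.min <| .iInf fun i ↦ by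
    split_ifs
    exacts [measurable_fst, (measurable_pi_apply i).comp measurable_snd]
  have hgZR_int : Integrable (fun ω ↦ g (Z ω, R ω)) P := by
    refine integrable_min_iInf (fun i ↦ ?_) ?_ t
    · split_ifs
      exacts [hZ.aemeasurable, ((measurable_pi_apply i).comp hR).aemeasurable]
    · filter_upwards [hX0, hZ0] with ω hX hZ i
      dsimp only [R]
      split_ifs
      exacts [hZ, hX i]
  calc ∫ ω, min t (⨅ i, if p i then Z' ω else X i ω) ∂P = ∫ ω, g (Z' ω, R ω) ∂P := by
        congr! 4 with ω
        ext i
        dsimp only [R]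
        split_ifs <;> rfl
    _ = ∫ ω, g (Z ω, R ω) ∂P :=
        (hZR.integral_comp_prodMk_eq hZ'R hZ hZ' hR.aemeasurable hg.aestronglyMeasurable).symm
    _ ≤ ∫ ω, min t (⨅ i, X i ω) ∂P := by
        refine integral_mono hgZR_int
          (integrable_min_iInf (fun i ↦ (hXm i).aemeasurable) hX0 t) fun ω ↦ ?_
        refine min_le_min_left t (ciInf_mono (Finite.bddBelow_range _) fun i ↦ ?_)
        dsimp only [R]
        split_ifs with hi
        exacts [hZX i hi ω, le_rfl]

end ProbabilityTheory

section Routes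

variable {Ω : Type*} {mΩ : MeasurableSpace Ω} {P : Measure Ω}
  {K : ℕ} {A B : Fin K → Ω → ℝ} {A' B' : Ω → ℝ}

def routeClocks (A B : Fin K → Ω → ℝ) (A' B' : Ω → ℝ) : (Fin K ⊕ Fin K) ⊕ Bool → Ω → ℝ :=
  Sum.elim (Sum.elim A B) fun b ↦ if b then B' else A'

lemma measurable_routeClocks (hAm : ∀ k, Measurable (A k)) (hBm : ∀ k, Measurable (B k))
    (hA'm : Measurable A') (hB'm : Measurable B') :
    ∀ i, Measurable (routeClocks A B A' B' i) := by
  rintro ((k | k) | _ | _)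
  exacts [hAm k, hBm k, hA'm, hB'm]

lemma indepFun_merged_rest (hind : iIndepFun (routeClocks A B A' B') P)
    (hm : ∀ i, Measurable (routeClocks A B A' B' i)) (p : Fin K → Prop) [DecidablePred p]
    {i₀ i₁ : Fin K} (h₀ : p i₀) (h₁ : p i₁) :
    IndepFun (fun ω ↦ min (A i₀ ω) (A i₁ ω) + min (B i₀ ω) (B i₁ ω))
        (fun ω k ↦ if p k then 0 else A k ω + B k ω) P ∧
      IndepFun (fun ω ↦ A' ω + B' ω) (fun ω k ↦ if p k then 0 else A k ω + B k ω) P := by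
  let front : Set ((Fin K ⊕ Fin K) ⊕ Bool) := {i | Sum.elim (Sum.elim p p) (fun _ ↦ True) i}
  have hmem {S : Set ((Fin K ⊕ Fin K) ⊕ Bool)} {i} (hi : i ∈ S) :=
    measurable_iSup_comap_of_mem (F := routeClocks A B A' B') (mβ := fun _ ↦ inferInstance) hi
  have hrest : Measurable[⨆ i ∈ frontᶜ, (inferInstance : MeasurableSpace ℝ).comap
      (routeClocks A B A' B' i)] (fun ω k ↦ if p k then 0 else A k ω + B k ω) := by
    -- the block σ-algebra has to be the ambient instance for `measurable_pi_lambda`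
    let _ := ⨆ i ∈ frontᶜ, (inferInstance : MeasurableSpace ℝ).comap (routeClocks A B A' B' i)
    refine measurable_pi_lambda _ fun k ↦ ?_
    split_ifs with hk
    exacts [measurable_const, (hmem (i := .inl (.inl k)) hk).add (hmem (i := .inl (.inr k)) hk)]
  refine ⟨hind.indepFun_of_measurable_iSup hm disjoint_compl_right ?_ hrest,
    hind.indepFun_of_measurable_iSup hm disjoint_compl_right ?_ hrest⟩
  · exact ((hmem (i := .inl (.inl i₀)) h₀).min (hmem (i := .inl (.inl i₁)) h₁)).add
      ((hmem (i := .inl (.inr i₀)) h₀).min (hmem (i := .inl (.inr i₁)) h₁))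
  · exact (hmem (S := front) (i := .inr false) trivial).add
      (hmem (S := front) (i := .inr true) trivial)

lemma hasLaw_min_add_min [IsProbabilityMeasure P] (hind : iIndepFun (routeClocks A B A' B') P)
    (hm : ∀ i, Measurable (routeClocks A B A' B' i)) {c u : Fin K → ℝ}
    (hc : ∀ k, 0 < c k) (hu : ∀ k, 0 < u k) (hA : ∀ k, HasLaw (A k) (expMeasure (c k)) P)
    (hB : ∀ k, HasLaw (B k) (expMeasure (u k)) P) {i₀ i₁ : Fin K} (h01 : i₀ ≠ i₁) :
    HasLaw (fun ω ↦ min (A i₀ ω) (A i₁ ω) + min (B i₀ ω) (B i₁ ω))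
      (expMeasure (c i₀ + c i₁) ∗ expMeasure (u i₀ + u i₁)) P := by
  refine IndepFun.hasLaw_fun_add ?_ ?_ ?_
  · exact (hind.indepFun (i := .inl (.inl i₀)) (j := .inl (.inl i₁)) (by simpa using h01)
      ).hasLaw_min_expMeasure (hc _) (hc _) (hA _) (hA _)
  · exact (hind.indepFun (i := .inl (.inr i₀)) (j := .inl (.inr i₁)) (by simpa using h01)
      ).hasLaw_min_expMeasure (hu _) (hu _) (hB _) (hB _)
  · exact (hind.indepFun_prodMk_prodMk hm (.inl (.inl i₀)) (.inl (.inl i₁)) (.inl (.inr i₀))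
      (.inl (.inr i₁)) (by simp) (by simp) (by simp) (by simp)).comp
      (measurable_fst.min measurable_snd) (measurable_fst.min measurable_snd)

end Routes

/-- Merging two parallel routes into one route with summed rates decreases the
expected user waiting time within a source cycle of length `t`:
`E[min(t, X₁, X₂, X₃, …, X_K)] ≥ E[min(t, X', X₃, …, X_K)]` where
`X_k = A_k + B_k` with `A_k ~ Exp(c_k)`, `B_k ~ Exp(u_k)` and
`X' = A' + B'` with `A' ~ Exp(c₁+c₂)`, `B' ~ Exp(u₁+u₂)`, all variables
mutually independent. -/
theorem merging_routes_decreases_waiting_time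
    {Ω : Type*} [MeasurableSpace Ω] (μ : Measure Ω) [IsProbabilityMeasure μ]
    (K : ℕ) (hK : 2 ≤ K)
    (c u : Fin K → ℝ) (hc : ∀ k, 0 < c k) (hu : ∀ k, 0 < u k)
    (A B : Fin K → Ω → ℝ) (A' B' : Ω → ℝ)
    (hAm : ∀ k, Measurable (A k)) (hBm : ∀ k, Measurable (B k))
    (hA'm : Measurable A') (hB'm : Measurable B')
    (hA : ∀ k, μ.map (A k) = expMeasure (c k))
    (hB : ∀ k, μ.map (B k) = expMeasure (u k))
    (hA' : μ.map A' = expMeasure (c ⟨0, by omega⟩ + c ⟨1, by omega⟩))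
    (hB' : μ.map B' = expMeasure (u ⟨0, by omega⟩ + u ⟨1, by omega⟩))
    (hind : iIndepFun
      (Sum.elim (Sum.elim A B) (fun b : Bool => if b then B' else A')) μ)
    (t : ℝ) :
    ∫ ω, min t (⨅ k, (A k ω + B k ω)) ∂μ ≥
      ∫ ω, min t (⨅ k : Fin K,
        if (k : ℕ) < 2 then A' ω + B' ω else A k ω + B k ω) ∂μ := by
  set i₀ : Fin K := ⟨0, by omega⟩
  set i₁ : Fin K := ⟨1, by omega⟩
  have hAlaw k : HasLaw (A k) (expMeasure (c k)) μ := ⟨(hAm k).aemeasurable, hA k⟩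
  have hBlaw k : HasLaw (B k) (expMeasure (u k)) μ := ⟨(hBm k).aemeasurable, hB k⟩
  have hm := measurable_routeClocks hAm hBm hA'm hB'm
  have h0 : ∀ᵐ ω ∂μ, ∀ k, 0 ≤ A k ω ∧ 0 ≤ B k ω := by
    filter_upwards [ae_all_iff.2 fun k ↦ (hAlaw k).ae_nonneg_of_expMeasure,
      ae_all_iff.2 fun k ↦ (hBlaw k).ae_nonneg_of_expMeasure] with ω hA hB k using ⟨hA k, hB k⟩
  have hZ := hasLaw_min_add_min hind hm hc hu hAlaw hBlaw (i₀ := i₀) (i₁ := i₁)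
    (by simp [i₀, i₁, Fin.ext_iff])
  have hZ' : HasLaw (fun ω ↦ A' ω + B' ω)
      (expMeasure (c i₀ + c i₁) ∗ expMeasure (u i₀ + u i₁)) μ :=
    IndepFun.hasLaw_fun_add ⟨hA'm.aemeasurable, hA'⟩ ⟨hB'm.aemeasurable, hB'⟩
      (hind.indepFun (i := .inr false) (j := .inr true) (by simp))
  obtain ⟨hZR, hZ'R⟩ := indepFun_merged_rest hind hm (fun k : Fin K ↦ (k : ℕ) < 2)
    (i₀ := i₀) (i₁ := i₁) (by simp [i₀]) (by simp [i₁])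
  have hZX (k : Fin K) (hk : (k : ℕ) < 2) :
      (fun ω ↦ min (A i₀ ω) (A i₁ ω) + min (B i₀ ω) (B i₁ ω)) ≤ fun ω ↦ A k ω + B k ω := by
    obtain rfl | rfl : k = i₀ ∨ k = i₁ := by simp only [Fin.ext_iff, i₀, i₁]; omega
    exacts [fun ω ↦ add_le_add (min_le_left _ _) (min_le_left _ _),
      fun ω ↦ add_le_add (min_le_right _ _) (min_le_right _ _)]
  exact integral_min_iInf_ite_le _ (fun k ↦ (hAm k).add (hBm k))
    (h0.mono fun _ h k ↦ add_nonneg (h k).1 (h k).2) hZ hZ'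
    (h0.mono fun _ h ↦ add_nonneg (le_min (h i₀).1 (h i₁).1) (le_min (h i₀).2 (h i₁).2))
    hZX hZR hZ'R t
end

section
/- Let λ > 0 and for each k = 1,…,K let c_k, u_k > 0 with c_k ≠ u_k. Then the K-cache freshness F = 1 − (∏_k c_k ∏_k u_k / ∏_k (c_k − u_k)) · Σ_{p ∈ ∏_k {c_k, u_k}} (−1)^{S_c(p)} / (∏_k p_k · (1 + (Σ_k p_k)/λ)), where S_c(p) = #{k : p_k = c_k}, satisfies 0 ≤ F ≤ 1. -/
open Finset

/-- Closed-form long-term average freshness of a file at the user in a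
parallel `K`-cache system. The sum ranges over all `2^K` choice vectors
`s : Fin K → Bool`, where `s k = true` selects `p_k = c_k` and `s k = false`
selects `p_k = u_k`, and `S_c(s)` counts the coordinates with `p_k = c_k`. -/
noncomputable def parallelFreshness (K : ℕ) (lam : ℝ) (c u : Fin K → ℝ) : ℝ :=
  1 - ((∏ k, c k) * (∏ k, u k) / ∏ k, (c k - u k)) *
    ∑ s : Fin K → Bool,
      (-1 : ℝ) ^ (univ.filter fun k => s k = true).card /
        ((∏ k, (if s k then c k else u k)) *
          (1 + (∑ k, (if s k then c k else u k)) / lam))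

/-!
Write `S_k(t) = (c_k e^{-u_k t} - u_k e^{-c_k t}) / (c_k - u_k)` for the survival function
`P(X_k > t)` of the hypoexponential time `X_k`. Then `1 - F = λ E[min(T_s, X₁, …, X_K)]` is
`∫₀^∞ λ e^{-λt} ∏_k S_k(t) dt`, which is checked directly: expanding the product over the choice
vectors `p` and integrating term by term gives the closed form. For `u < c` the function
`c e^{-ut} - u e^{-ct}` decreases from `c - u` and stays nonnegative, so each `S_k(t)` lies in
`[0, 1]`; hence the integrand lies between `0` and the density `λ e^{-λt}`, of integral `1`.
-/

open Real Set MeasureTheory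

noncomputable def hypoexpSurvival (c u t : ℝ) : ℝ :=
  (c * exp (-u * t) - u * exp (-c * t)) / (c - u)

noncomputable def hypoexpWeight (c u : ℝ) (b : Bool) : ℝ :=
  if b then -u / (c - u) else c / (c - u)

lemma hypoexpSurvival_comm (c u t : ℝ) : hypoexpSurvival c u t = hypoexpSurvival u c t := by
  rw [hypoexpSurvival, hypoexpSurvival, ← neg_div_neg_eq, neg_sub, neg_sub]

lemma mul_exp_neg_mul_le_mul_exp_neg_mul {c u t : ℝ} (hu : 0 ≤ u) (huc : u ≤ c) (ht : 0 ≤ t) :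
    u * exp (-c * t) ≤ c * exp (-u * t) := by
  gcongr
  nlinarith

lemma mul_exp_neg_mul_sub_le_sub {c u t : ℝ} (hu : 0 ≤ u) (huc : u ≤ c) (ht : 0 ≤ t) :
    c * exp (-u * t) - u * exp (-c * t) ≤ c - u := by
  set f : ℝ → ℝ := fun x => c * exp (-u * x) - u * exp (-c * x)
  have hf : ∀ x, HasDerivAt f (c * u * (exp (-c * x) - exp (-u * x))) x := fun x =>
    ((((hasDerivAt_id x).const_mul (-u)).exp.const_mul c).sub
      (((hasDerivAt_id x).const_mul (-c)).exp.const_mul u)).congr_deriv (by simp only [id]; ring)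
  have hf_anti : AntitoneOn f (Set.Ici 0) := by
    refine antitoneOn_of_deriv_nonpos (convex_Ici (0 : ℝ))
      (fun x _ => (hf x).continuousAt.continuousWithinAt)
      (fun x _ => (hf x).differentiableAt.differentiableWithinAt) fun x hx => ?_
    rw [(hf x).deriv]
    have hx : 0 ≤ x := (interior_subset hx : x ∈ Set.Ici (0 : ℝ))
    have hc : 0 ≤ c := hu.trans huc
    exact mul_nonpos_of_nonneg_of_nonpos (by positivity) (sub_nonpos.2 (by gcongr))
  simpa [f] using hf_anti self_mem_Ici ht ht

lemma hypoexpSurvival_mem_Icc {c u t : ℝ} (hc : 0 ≤ c) (hu : 0 ≤ u) (ht : 0 ≤ t) :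
    hypoexpSurvival c u t ∈ Set.Icc 0 1 := by
  wlog huc : u < c generalizing c u
  · rcases (not_lt.1 huc).lt_or_eq with hcu | rfl
    · rw [hypoexpSurvival_comm]; exact this hu hc hcu
    · simp [hypoexpSurvival] -- `0 / 0 = 0`
  have hcu : 0 < c - u := sub_pos.2 huc
  exact ⟨div_nonneg (sub_nonneg.2 (mul_exp_neg_mul_le_mul_exp_neg_mul hu huc.le ht)) hcu.le,
    (div_le_one hcu).2 (mul_exp_neg_mul_sub_le_sub hu huc.le ht)⟩

lemma hypoexpSurvival_eq_sum_bool (c u t : ℝ) :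
    hypoexpSurvival c u t = ∑ b : Bool, hypoexpWeight c u b * exp (-(if b then c else u) * t) := by
  simp only [hypoexpSurvival, hypoexpWeight, Fintype.sum_bool, if_true, Bool.false_eq_true,
    if_false]
  ring

lemma prod_hypoexpSurvival_eq_sum {ι : Type*} [Fintype ι] [DecidableEq ι] (c u : ι → ℝ) (t : ℝ) :
    ∏ i, hypoexpSurvival (c i) (u i) t =
      ∑ s : ι → Bool, (∏ i, hypoexpWeight (c i) (u i) (s i)) *
        exp (-(∑ i, if s i then c i else u i) * t) := by
  simp_rw [hypoexpSurvival_eq_sum_bool, Fintype.prod_sum, prod_mul_distrib, ← exp_sum]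
  simp only [neg_mul, sum_neg_distrib, sum_mul]

lemma integral_exp_neg_mul_Ioi_zero {b : ℝ} (hb : 0 < b) :
    ∫ t in Ioi 0, exp (-b * t) = 1 / b := by
  rw [integral_exp_mul_Ioi (neg_lt_zero.2 hb), mul_zero, exp_zero, neg_div_neg_eq]

lemma integral_sum_mul_exp_neg_mul_Ioi {ι : Type*} (s : Finset ι) (a b : ι → ℝ)
    (hb : ∀ i ∈ s, 0 < b i) :
    ∫ t in Ioi 0, ∑ i ∈ s, a i * exp (-b i * t) = ∑ i ∈ s, a i / b i := by
  rw [integral_finsetSum s fun i hi => (exp_neg_integrableOn_Ioi 0 (hb i hi)).const_mul (a i)]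
  refine sum_congr rfl fun i hi => ?_
  rw [integral_const_mul, integral_exp_neg_mul_Ioi_zero (hb i hi), mul_one_div]

@[fun_prop]
lemma continuous_hypoexpSurvival (c u : ℝ) : Continuous (hypoexpSurvival c u) := by
  unfold hypoexpSurvival
  fun_prop

lemma neg_one_pow_card_filter_eq_prod {ι : Type*} [Fintype ι] (s : ι → Bool) :
    (-1 : ℝ) ^ (univ.filter fun i => s i = true).card = ∏ i, if s i then -1 else 1 := by
  rw [← prod_const, prod_filter]

lemma prod_hypoexpWeight {ι : Type*} [Fintype ι] {c u : ι → ℝ} (hc : ∀ i, c i ≠ 0)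
    (hu : ∀ i, u i ≠ 0) (s : ι → Bool) :
    ∏ i, hypoexpWeight (c i) (u i) (s i) =
      (∏ i, c i) * (∏ i, u i) / (∏ i, (c i - u i)) *
        ((-1 : ℝ) ^ (univ.filter fun i => s i = true).card / ∏ i, if s i then c i else u i) := by
  rw [neg_one_pow_card_filter_eq_prod, ← prod_mul_distrib, ← prod_div_distrib, ← prod_div_distrib,
    ← prod_mul_distrib]
  refine prod_congr rfl fun i _ => ?_
  cases s i <;> simp only [hypoexpWeight, Bool.false_eq_true, if_true, if_false] <;>
    field_simp [hc i, hu i]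

section Freshness

variable {K : ℕ} {lam : ℝ} {c u : Fin K → ℝ}

lemma one_sub_parallelFreshness_eq_integral (hlam : 0 < lam) (hc : ∀ k, 0 < c k)
    (hu : ∀ k, 0 < u k) :
    1 - parallelFreshness K lam c u =
      ∫ t in Ioi 0, lam * exp (-lam * t) * ∏ k, hypoexpSurvival (c k) (u k) t := by
  have hP : ∀ s : Fin K → Bool, 0 < lam + ∑ k, if s k then c k else u k := fun s =>
    add_pos_of_pos_of_nonneg hlam <| sum_nonneg fun k _ => by
      cases s k <;> simp [(hc k).le, (hu k).le]
  have hintegrand : ∀ t, lam * exp (-lam * t) * ∏ k, hypoexpSurvival (c k) (u k) t =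
      ∑ s : Fin K → Bool, (lam * ∏ k, hypoexpWeight (c k) (u k) (s k)) *
        exp (-(lam + ∑ k, if s k then c k else u k) * t) := fun t => by
    rw [prod_hypoexpSurvival_eq_sum, mul_sum]
    refine sum_congr rfl fun s _ => ?_
    rw [neg_add, add_mul, exp_add]
    ring
  simp_rw [hintegrand]
  rw [integral_sum_mul_exp_neg_mul_Ioi _ _ _ fun s _ => hP s, parallelFreshness, sub_sub_cancel,
    mul_sum]
  refine sum_congr rfl fun s _ => ?_
  rw [prod_hypoexpWeight (fun k => (hc k).ne') (fun k => (hu k).ne')]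
  field_simp [(hP s).ne']

lemma integral_mul_prod_hypoexpSurvival_mem_Icc (hlam : 0 < lam) (hc : ∀ k, 0 ≤ c k)
    (hu : ∀ k, 0 ≤ u k) :
    ∫ t in Ioi 0, lam * exp (-lam * t) * ∏ k, hypoexpSurvival (c k) (u k) t ∈ Set.Icc 0 1 := by
  have hS : ∀ t ∈ Ioi (0 : ℝ), ∏ k, hypoexpSurvival (c k) (u k) t ∈ Set.Icc 0 1 := fun t ht =>
    have hSk k := hypoexpSurvival_mem_Icc (hc k) (hu k) (le_of_lt ht)
    ⟨prod_nonneg fun k _ => (hSk k).1, prod_le_one (fun k _ => (hSk k).1) fun k _ => (hSk k).2⟩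
  have hdensity : IntegrableOn (fun t => lam * exp (-lam * t)) (Ioi 0) :=
    (exp_neg_integrableOn_Ioi 0 hlam).const_mul lam
  have hnonneg : ∀ t ∈ Ioi (0 : ℝ),
      0 ≤ lam * exp (-lam * t) * ∏ k, hypoexpSurvival (c k) (u k) t :=
    fun t ht => mul_nonneg (by positivity) (hS t ht).1
  have hle : ∀ t ∈ Ioi (0 : ℝ),
      lam * exp (-lam * t) * ∏ k, hypoexpSurvival (c k) (u k) t ≤ lam * exp (-lam * t) :=
    fun t ht => mul_le_of_le_one_right (by positivity) (hS t ht).2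
  have hintegrable : IntegrableOn
      (fun t => lam * exp (-lam * t) * ∏ k, hypoexpSurvival (c k) (u k) t) (Ioi 0) :=
    hdensity.mono' (by fun_prop : Continuous _).aestronglyMeasurable <|
      (ae_restrict_iff' measurableSet_Ioi).2 <| ae_of_all _ fun t ht => by
        rw [norm_of_nonneg (hnonneg t ht)]
        exact hle t ht
  refine ⟨setIntegral_nonneg measurableSet_Ioi hnonneg, ?_⟩
  calc ∫ t in Ioi 0, lam * exp (-lam * t) * ∏ k, hypoexpSurvival (c k) (u k) t
      ≤ ∫ t in Ioi 0, lam * exp (-lam * t) :=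
        setIntegral_mono_on hintegrable hdensity measurableSet_Ioi hle
    _ = 1 := by
        rw [integral_const_mul, integral_exp_neg_mul_Ioi_zero hlam, mul_one_div_cancel hlam.ne']

end Freshness

theorem parallelFreshness_mem_unit_interval_general (K : ℕ) (lam : ℝ) (c u : Fin K → ℝ)
    (hlam : 0 < lam) (hc : ∀ k, 0 < c k) (hu : ∀ k, 0 < u k) :
    0 ≤ parallelFreshness K lam c u ∧ parallelFreshness K lam c u ≤ 1 := by
  have h := integral_mul_prod_hypoexpSurvival_mem_Icc hlam (fun k => (hc k).le) (fun k => (hu k).le)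
  rw [← one_sub_parallelFreshness_eq_integral hlam hc hu] at h
  constructor <;> linarith [h.1, h.2]

/-- The `K`-cache freshness formula takes values in `[0, 1]`. -/
theorem parallelFreshness_mem_unit_interval (K : ℕ) (lam : ℝ) (c u : Fin K → ℝ)
    (hlam : 0 < lam) (hc : ∀ k, 0 < c k) (hu : ∀ k, 0 < u k)
    (hcu : ∀ k, c k ≠ u k) :
    0 ≤ parallelFreshness K lam c u ∧ parallelFreshness K lam c u ≤ 1 :=
  parallelFreshness_mem_unit_interval_general K lam c u hlam hc hu
end
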